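/- Under the distribution of the trade-off theorem (Y uniform on {-1,1}; X_0|Y=y is y with probability p and -y with probability 1-p, 1/2 ≤ p; Gaussian block coordinates as specified; r the random pair-swap transformation; A the mean-flipping adversarial perturbation), every classifier f : ℝ^{2d+1} → {-1,1} satisfies: P(f(r(X)) = Y) + ((2p-1)/(2(1-p))) · P(f(X + A(X)) = Y) ≤ p/(2(1-p)). -/

import Mathlib

open MeasureTheory ProbabilityTheory ENNReal

/-- Law of X₀ given Y = y: equals y with probability p and -y with probability 1-p. -/
noncomputable def bern (p : ℝ) (y : ℝ) : MeasureTheory.Measure ℝ :=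
  ENNReal.ofReal p • MeasureTheory.Measure.dirac y +
    ENNReal.ofReal (1 - p) • MeasureTheory.Measure.dirac (-y)

/-- Conditional law of X = (X₀, X₁, …, X_{2d}) given Y = y. -/
noncomputable def condLaw (d : ℕ) (p : ℝ) (y : ℝ) :
    MeasureTheory.Measure (Fin (2 * d + 1) → ℝ) :=
  MeasureTheory.Measure.pi (fun i =>
    if i.val = 0 then bern p y
    else if i.val % 2 = 1 then ProbabilityTheory.gaussianReal (3 * y / Real.sqrt d) 1
    else ProbabilityTheory.gaussianReal (-3 * y / Real.sqrt d) 1)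

/-- Joint law of (X, Y), with Y uniform on {-1, 1}. -/
noncomputable def jointLaw (d : ℕ) (p : ℝ) :
    MeasureTheory.Measure ((Fin (2 * d + 1) → ℝ) × ℝ) :=
  (2⁻¹ : ℝ≥0∞) • (condLaw d p 1).map (fun x => (x, (1 : ℝ))) +
    (2⁻¹ : ℝ≥0∞) • (condLaw d p (-1)).map (fun x => (x, (-1 : ℝ)))

/-- The adversarial perturbation A(x) (depending only on the true label y). -/
noncomputable def pert (d : ℕ) (y : ℝ) : Fin (2 * d + 1) → ℝ := fun i =>
  if i.val = 0 then 0
  else if i.val % 2 = 1 then -6 * y / Real.sqrt d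
  else 6 * y / Real.sqrt d

/-- The index permutation fixing 0 and swapping each pair (2t-1, 2t). -/
def swapIdx (d : ℕ) (i : Fin (2 * d + 1)) : Fin (2 * d + 1) :=
  if h0 : i.val = 0 then i
  else if h1 : i.val % 2 = 1 then ⟨i.val + 1, by have := i.isLt; omega⟩
  else ⟨i.val - 1, by have := i.isLt; omega⟩

/-- The coordinate-pair swap on ℝ^{2d+1}. -/
def swapMap (d : ℕ) (x : Fin (2 * d + 1) → ℝ) : Fin (2 * d + 1) → ℝ :=
  fun i => x (swapIdx d i)

/-- Law of (X + A(X), Y). -/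
noncomputable def advLaw (d : ℕ) (p : ℝ) :
    MeasureTheory.Measure ((Fin (2 * d + 1) → ℝ) × ℝ) :=
  (jointLaw d p).map (fun q => (q.1 + pert d q.2, q.2))

/-- Law of (r(X), Y): with prob 1/2 identity, with prob 1/2 the pair swap. -/
noncomputable def rLaw (d : ℕ) (p : ℝ) :
    MeasureTheory.Measure ((Fin (2 * d + 1) → ℝ) × ℝ) :=
  (2⁻¹ : ℝ≥0∞) • jointLaw d p +
    (2⁻¹ : ℝ≥0∞) • (jointLaw d p).map (fun q => (swapMap d q.1, q.2))

/-!
Swapping the two coordinates of every Gaussian pair and adding the perturbation `A` act in the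
same way on the conditional law of `X`: both turn the law of `X` given `Y = y` with parameter `p`
into the law of `X` given `Y = -y` with parameter `1 - p`. Hence `P(f(r(X)) = Y)` is the average
of the clean and the adversarial accuracy, and the adversarial law is the `(1 - p)`-model with
its labels negated. The two models differ only in the law of `X₀`, where
`((1 - p) / p) • bern p y ≤ bern (1 - p) y`; so the clean accuracy, weighted by `(1 - p) / p`,
bounds the adversarial error from below, and the rest is linear arithmetic.
-/

namespace MeasureTheory.Measure

theorem pi_map_comp_equiv {ι ι' α : Type*} [Fintype ι] [Fintype ι'] [MeasurableSpace α]
    (μ : ι → Measure α) [∀ i, SigmaFinite (μ i)] (e : ι' ≃ ι) :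
    (Measure.pi μ).map (fun x => x ∘ e) = Measure.pi (fun i => μ (e i)) := by
  convert (measurePreserving_piCongrLeft (α := fun _ => α) μ e).symm.map_eq using 2
  ext x i
  rfl

theorem smul_pi_le_pi {α : Type*} [MeasurableSpace α] {n : ℕ} {μ ν : Fin (n + 1) → Measure α}
    [∀ i, SigmaFinite (μ i)] [∀ i, SigmaFinite (ν i)] {c : ℝ≥0∞} (i : Fin (n + 1))
    (hi : c • μ i ≤ ν i) (hne : ∀ j ≠ i, μ j = ν j) :
    c • Measure.pi μ ≤ Measure.pi ν := by
  have hrest : (fun j => μ (i.succAbove j)) = fun j => ν (i.succAbove j) :=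
    funext fun j => hne _ (Fin.succAbove_ne i j)
  rw [← (measurePreserving_piFinSuccAbove μ i).symm.map_eq,
    ← (measurePreserving_piFinSuccAbove ν i).symm.map_eq, hrest, ← Measure.map_smul,
    ← prod_smul_left]
  exact map_mono (prod_mono hi le_rfl) (MeasurableEquiv.measurable _)

end MeasureTheory.Measure

instance (p y : ℝ) : IsFiniteMeasure (bern p y) := by
  unfold bern
  constructor
  simp [ENNReal.add_lt_top]

lemma isProbabilityMeasure_bern {p : ℝ} (hp0 : 0 ≤ p) (hp1 : p ≤ 1) (y : ℝ) :
    IsProbabilityMeasure (bern p y) := by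
  constructor
  simp [bern, ← ENNReal.ofReal_add hp0 (sub_nonneg.2 hp1)]

lemma bern_one_sub_neg (p y : ℝ) : bern (1 - p) (-y) = bern p y := by
  rw [bern, bern, sub_sub_cancel (1 : ℝ) p, neg_neg, add_comm]

lemma smul_bern_le_bern_one_sub {p : ℝ} (hp0 : 1 / 2 ≤ p) (hp1 : p ≤ 1) (y : ℝ) :
    ENNReal.ofReal ((1 - p) / p) • bern p y ≤ bern (1 - p) y := by
  have hp : 0 < p := by linarith
  have hc : 0 ≤ (1 - p) / p := div_nonneg (by linarith) hp.le
  intro s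
  simp only [bern, Measure.add_apply, Measure.smul_apply, smul_eq_mul, mul_add, ← mul_assoc,
    ← ENNReal.ofReal_mul hc]
  gcongr
  · rw [div_mul_cancel₀ _ hp.ne']
  · rw [div_mul_eq_mul_div, div_le_iff₀ hp]
    nlinarith

section condLaw

variable (d : ℕ)

noncomputable def condFactor (p y : ℝ) (i : Fin (2 * d + 1)) : Measure ℝ :=
  if i.val = 0 then bern p y
  else if i.val % 2 = 1 then gaussianReal (3 * y / Real.sqrt d) 1
  else gaussianReal (-3 * y / Real.sqrt d) 1

lemma condLaw_eq_pi (p y : ℝ) : condLaw d p y = Measure.pi (condFactor d p y) := rfl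

instance (p y : ℝ) (i : Fin (2 * d + 1)) : IsFiniteMeasure (condFactor d p y i) := by
  unfold condFactor; split_ifs <;> infer_instance

lemma isProbabilityMeasure_condLaw {p : ℝ} (hp0 : 0 ≤ p) (hp1 : p ≤ 1) (y : ℝ) :
    IsProbabilityMeasure (condLaw d p y) := by
  have (i : Fin (2 * d + 1)) : IsProbabilityMeasure (condFactor d p y i) := by
    unfold condFactor
    split_ifs
    exacts [isProbabilityMeasure_bern hp0 hp1 y, inferInstance, inferInstance]
  rw [condLaw_eq_pi]
  infer_instance

lemma swapIdx_val (i : Fin (2 * d + 1)) :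
    (swapIdx d i).val = if i.val = 0 then i.val
      else if i.val % 2 = 1 then i.val + 1 else i.val - 1 := by
  unfold swapIdx; split_ifs <;> rfl

lemma swapIdx_involutive : Function.Involutive (swapIdx d) := fun i => by
  have := i.isLt
  apply Fin.ext
  simp only [swapIdx_val]
  split_ifs <;> first | contradiction | omega

lemma condFactor_swapIdx (p y : ℝ) (i : Fin (2 * d + 1)) :
    condFactor d p y (swapIdx d i) = condFactor d (1 - p) (-y) i := by
  have := i.isLt
  simp only [condFactor, swapIdx_val]
  split_ifs <;> first | contradiction | omega | rw [bern_one_sub_neg] | (congr 1; ring)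

lemma map_condFactor_add_pert (p y : ℝ) (i : Fin (2 * d + 1)) :
    (condFactor d p y i).map (· + pert d y i) = condFactor d (1 - p) (-y) i := by
  simp only [condFactor, pert]
  split_ifs
  · simp [bern_one_sub_neg]
  all_goals rw [gaussianReal_map_add_const]; congr 1; ring

lemma map_swapMap_condLaw (p y : ℝ) :
    (condLaw d p y).map (swapMap d) = condLaw d (1 - p) (-y) := by
  rw [condLaw_eq_pi, condLaw_eq_pi, ← funext (condFactor_swapIdx d p y)]
  exact Measure.pi_map_comp_equiv _ (swapIdx_involutive d).toPerm

lemma map_add_pert_condLaw (p y : ℝ) :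
    (condLaw d p y).map (· + pert d y) = condLaw d (1 - p) (-y) := by
  rw [condLaw_eq_pi, condLaw_eq_pi, ← funext (map_condFactor_add_pert d p y),
    ← Measure.pi_map_pi fun i => (measurable_add_const _).aemeasurable]
  rfl

lemma smul_condLaw_le_condLaw_one_sub {p : ℝ} (hp0 : 1 / 2 ≤ p) (hp1 : p ≤ 1) (y : ℝ) :
    ENNReal.ofReal ((1 - p) / p) • condLaw d p y ≤ condLaw d (1 - p) y := by
  refine Measure.smul_pi_le_pi (μ := condFactor d p y) (ν := condFactor d (1 - p) y) 0 ?_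
    fun j hj => ?_
  · simpa [condFactor] using smul_bern_le_bern_one_sub hp0 hp1 y
  · simp [condFactor, hj]

end condLaw

section jointLaw

variable {d : ℕ}

lemma map_jointLaw {β : Type*} [MeasurableSpace β] {F : (Fin (2 * d + 1) → ℝ) × ℝ → β}
    (hF : Measurable F) (p : ℝ) :
    (jointLaw d p).map F = (2⁻¹ : ℝ≥0∞) • (condLaw d p 1).map (fun x => F (x, 1)) +
      (2⁻¹ : ℝ≥0∞) • (condLaw d p (-1)).map (fun x => F (x, -1)) := by
  rw [jointLaw, Measure.map_add _ _ hF, Measure.map_smul, Measure.map_smul,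
    Measure.map_map hF (by fun_prop), Measure.map_map hF (by fun_prop)]
  rfl

lemma map_jointLaw_eq_map_neg_snd {g : ℝ → (Fin (2 * d + 1) → ℝ) → Fin (2 * d + 1) → ℝ}
    (hg : Measurable fun q : (Fin (2 * d + 1) → ℝ) × ℝ => g q.2 q.1)
    {p : ℝ} (hmap : ∀ y, (condLaw d p y).map (g y) = condLaw d (1 - p) (-y)) :
    (jointLaw d p).map (fun q => (g q.2 q.1, q.2)) =
      (jointLaw d (1 - p)).map (fun q => (q.1, -q.2)) := by
  have hcond (y : ℝ) : (condLaw d p y).map (fun x => (g y x, y)) =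
      (condLaw d (1 - p) (-y)).map (fun x => ((x, -y).1, -(x, -y).2)) := by
    rw [← hmap, Measure.map_map (by fun_prop)
      (show Measurable (g y) from hg.comp (measurable_id.prodMk measurable_const))]
    simp only [neg_neg]
    rfl
  rw [map_jointLaw (hg.prodMk measurable_snd), map_jointLaw (by fun_prop), hcond, hcond]
  simp only [neg_neg]
  exact add_comm _ _

variable (d)

@[fun_prop]
lemma measurable_swapMap : Measurable (swapMap d) :=
  measurable_pi_lambda _ fun _ => measurable_pi_apply _

@[fun_prop]
lemma measurable_pert : Measurable (pert d) :=
  measurable_pi_lambda _ fun i => by unfold pert; split_ifs <;> fun_prop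

lemma advLaw_eq_map_neg_snd (p : ℝ) :
    advLaw d p = (jointLaw d (1 - p)).map (fun q => (q.1, -q.2)) :=
  map_jointLaw_eq_map_neg_snd (by fun_prop) (map_add_pert_condLaw d p)

lemma map_swapMap_jointLaw (p : ℝ) :
    (jointLaw d p).map (fun q => (swapMap d q.1, q.2)) = advLaw d p := by
  rw [advLaw_eq_map_neg_snd]
  exact map_jointLaw_eq_map_neg_snd (g := fun _ => swapMap d) (by fun_prop)
    (map_swapMap_condLaw d p)

lemma rLaw_apply (p : ℝ) (s : Set ((Fin (2 * d + 1) → ℝ) × ℝ)) :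
    rLaw d p s = 2⁻¹ * jointLaw d p s + 2⁻¹ * advLaw d p s := by
  simp [rLaw, map_swapMap_jointLaw]

lemma isProbabilityMeasure_jointLaw {p : ℝ} (hp0 : 0 ≤ p) (hp1 : p ≤ 1) :
    IsProbabilityMeasure (jointLaw d p) := by
  have := isProbabilityMeasure_condLaw d hp0 hp1 1
  have := isProbabilityMeasure_condLaw d hp0 hp1 (-1)
  have := Measure.isProbabilityMeasure_map (μ := condLaw d p 1) (f := fun x => (x, (1 : ℝ)))
    (by fun_prop)
  have := Measure.isProbabilityMeasure_map (μ := condLaw d p (-1)) (f := fun x => (x, (-1 : ℝ)))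
    (by fun_prop)
  constructor
  simp [jointLaw, ENNReal.inv_two_add_inv_two]

lemma smul_jointLaw_le_jointLaw_one_sub {p : ℝ} (hp0 : 1 / 2 ≤ p) (hp1 : p ≤ 1) :
    ENNReal.ofReal ((1 - p) / p) • jointLaw d p ≤ jointLaw d (1 - p) := by
  simp only [jointLaw, smul_add, smul_comm (ENNReal.ofReal _) (2⁻¹ : ℝ≥0∞), ← Measure.map_smul]
  gcongr <;> first | fun_prop | exact smul_condLaw_le_condLaw_one_sub d hp0 hp1 _

end jointLaw

lemma tradeoff_of_le {p a b : ℝ} (hp0 : 0 < p) (hp1 : p < 1) (hab : (1 - p) / p * a ≤ 1 - b) :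
    2⁻¹ * a + 2⁻¹ * b + (2 * p - 1) / (2 * (1 - p)) * b ≤ p / (2 * (1 - p)) := by
  rw [div_mul_eq_mul_div, div_le_iff₀ hp0] at hab
  have h1p : 1 - p ≠ 0 := by linarith
  rw [← sub_nonneg]
  have h : p / (2 * (1 - p)) - (2⁻¹ * a + 2⁻¹ * b + (2 * p - 1) / (2 * (1 - p)) * b) =
      ((1 - b) * p - (1 - p) * a) / (2 * (1 - p)) := by
    field_simp
    ring
  rw [h]
  exact div_nonneg (by linarith) (by linarith)

theorem invariance_robustness_inequality_general (d : ℕ) (p : ℝ)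
    (hp0 : 1/2 ≤ p) (hp1 : p < 1)
    (f : (Fin (2 * d + 1) → ℝ) → ℝ) (hf : Measurable f)
    (hfval : ∀ x, f x = 1 ∨ f x = -1) :
    (rLaw d p {q | f q.1 = q.2}).toReal +
        ((2 * p - 1) / (2 * (1 - p))) * (advLaw d p {q | f q.1 = q.2}).toReal ≤
      p / (2 * (1 - p)) := by
  set S := {q : (Fin (2 * d + 1) → ℝ) × ℝ | f q.1 = q.2}
  have hS : MeasurableSet S := measurableSet_eq_fun (by fun_prop) measurable_snd
  have : IsProbabilityMeasure (jointLaw d p) :=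
    isProbabilityMeasure_jointLaw d (by linarith) hp1.le
  have : IsProbabilityMeasure (advLaw d p) := by
    rw [advLaw_eq_map_neg_snd]
    have := isProbabilityMeasure_jointLaw d (by linarith) (by linarith : 1 - p ≤ 1)
    exact Measure.isProbabilityMeasure_map (by fun_prop)
  -- A correct answer on flipped labels `f x = -y` is a wrong answer on true labels.
  have hflip : ENNReal.ofReal ((1 - p) / p) * jointLaw d p S ≤ advLaw d p Sᶜ := calc
    _ ≤ jointLaw d (1 - p) S := smul_jointLaw_le_jointLaw_one_sub d hp0 hp1.le S
    _ = advLaw d p {q | f q.1 = -q.2} := by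
      rw [advLaw_eq_map_neg_snd, Measure.map_apply (by fun_prop)
        (measurableSet_eq_fun (by fun_prop) (by fun_prop))]
      simp [S]
    _ ≤ advLaw d p Sᶜ := measure_mono fun q (hneg : f q.1 = -q.2) (hpos : f q.1 = q.2) => by
      rcases hfval q.1 with h | h <;> linarith
  rw [rLaw_apply, ENNReal.toReal_add (by finiteness) (by finiteness)]
  simp only [ENNReal.toReal_mul, ENNReal.toReal_inv, ENNReal.toReal_ofNat]
  refine tradeoff_of_le (by linarith) hp1 ?_
  have := ENNReal.toReal_mono (by finiteness) hflip
  rwa [ENNReal.toReal_mul, ENNReal.toReal_ofReal (div_nonneg (by linarith) (by linarith)),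
    prob_compl_eq_one_sub hS, ENNReal.toReal_sub_of_le prob_le_one ENNReal.one_ne_top,
    ENNReal.toReal_one] at this

/-- The trade-off inequality:
P(f(r(X)) = Y) + ((2p-1)/(2(1-p))) · P(f(X + A(X)) = Y) ≤ p/(2(1-p)). -/
theorem invariance_robustness_inequality (d : ℕ) (hd : 1 ≤ d) (p : ℝ)
    (hp0 : 1/2 ≤ p) (hp1 : p < 1)
    (f : (Fin (2 * d + 1) → ℝ) → ℝ) (hf : Measurable f)
    (hfval : ∀ x, f x = 1 ∨ f x = -1) :
    (rLaw d p {q | f q.1 = q.2}).toReal +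
        ((2 * p - 1) / (2 * (1 - p))) * (advLaw d p {q | f q.1 = q.2}).toReal ≤
      p / (2 * (1 - p)) :=
  invariance_robustness_inequality_general d p hp0 hp1 f hf hfval
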